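/- Let G be a finite simple graph on vertex set V, let k ≥ |V|, let I be the set of all partitions of V into independent sets of G, and for each P ∈ I fix a proper k-coloring c_P of G with kernel partition P. Define L ∈ ℕ^{I×I} by L(P,Q) = number of proper k-colorings of G □ P₂ whose layer-1 coloring equals c_P and whose layer-2 kernel partition equals Q. Then for every integer n ≥ 1, the total number of proper k-colorings of G □ P_{n+1} equals Σ_{P∈I} w_P · Σ_{Q∈I} (Lⁿ)(P,Q), where w_P is the number of proper k-colorings of G with kernel partition P. -/

import Mathlib

/-!
A proper colouring of `G □ P_{n+1}` is a chain of `n + 1` proper colourings of `G` (its layers)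
in which consecutive layers differ at every vertex. Renaming colours by a permutation shows
that the number of layers `d` with kernel `Q` that may follow a layer `c` depends only on the
kernel of `c`, and taking `c = c_P` identifies it with `L (ker c) Q`. Counting chains by the
kernel of their last layer then gives the recursion `N_{n+1}(Q) = Σ_R N_n(R) L(R, Q)`, with
`N_0(P) = w_P`.
-/

open SimpleGraph

/-- The set of partitions (as setoids) of the vertex set of `G` all of whose blocks
are independent sets of `G`. -/
def IndepPartition {V : Type*} (G : SimpleGraph V) : Type _ :=
  {s : Setoid V // ∀ u v, s.r u v → ¬ G.Adj u v}

instance {V : Type*} [Finite V] (G : SimpleGraph V) : Finite (IndepPartition G) := by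
  have : Finite (Setoid V) :=
    Finite.of_injective (fun s : Setoid V => s.r)
      (fun a b h => Setoid.ext fun x y => by rw [show a.r = b.r from h])
  exact Subtype.finite

noncomputable instance {V : Type*} [Finite V] (G : SimpleGraph V) :
    Fintype (IndepPartition G) := Fintype.ofFinite _

noncomputable instance {V : Type*} (G : SimpleGraph V) :
    DecidableEq (IndepPartition G) := Classical.decEq _

theorem Setoid.ker_comp_of_injective {α β γ : Type*} {g : β → γ} (hg : Function.Injective g)
    (f : α → β) : Setoid.ker (g ∘ f) = Setoid.ker f :=
  Setoid.ext fun _ _ => by simp only [Setoid.ker_def, Function.comp_apply, hg.eq_iff]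

theorem exists_perm_comp_eq_of_ker_eq {α β : Type*} [Finite β] {f g : α → β}
    (h : Setoid.ker f = Setoid.ker g) : ∃ σ : Equiv.Perm β, σ ∘ f = g := by
  classical
  let e : Set.range f ≃ Set.range g :=
    (Setoid.quotientKerEquivRange f).symm.trans <|
      (Quotient.congrRight fun _ _ => by rw [h]).trans (Setoid.quotientKerEquivRange g)
  refine ⟨e.extendSubtype, funext fun v => ?_⟩
  have hv : (Setoid.quotientKerEquivRange f).symm ⟨f v, v, rfl⟩ = Quotient.mk _ v :=
    (Equiv.symm_apply_eq _).2 rfl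
  rw [Function.comp_apply, Equiv.extendSubtype_apply_of_mem _ _ ⟨v, rfl⟩]
  simp only [e, Equiv.trans_apply, hv]
  rfl

theorem Nat.card_sigma_eq_sum_card_fiber_mul {β ι : Type*} [Finite β] [Fintype ι]
    (g : β → ι) (X : β → Type*) [∀ b, Finite (X b)] (m : ι → ℕ)
    (h : ∀ b, Nat.card (X b) = m (g b)) :
    Nat.card (Σ b, X b) = ∑ i, Nat.card {b // g b = i} * m i := by
  classical
  have := Fintype.ofFinite β
  simp_rw [Nat.card_sigma, h, Nat.card_eq_fintype_card, Fintype.card_subtype,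
    ← Finset.sum_fiberwise Finset.univ g (fun b => m (g b))]
  refine Finset.sum_congr rfl fun i _ => ?_
  rw [Finset.sum_congr rfl fun b hb => congrArg m (Finset.mem_filter.1 hb).2, Finset.sum_const,
    smul_eq_mul]

section RelChain

variable {α ι : Type*} (r : α → α → Prop)

abbrev RelChain (n : ℕ) : Type _ :=
  {f : Fin (n + 1) → α // ∀ i : Fin n, r (f i.castSucc) (f i.succ)}

variable {r}

def RelChain.snocEquiv (n : ℕ) (p : α → Prop) :
    {f : RelChain r (n + 1) // p (f.1 (Fin.last _))} ≃
      Σ f : RelChain r n, {b // r (f.1 (Fin.last n)) b ∧ p b} where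
  toFun f := ⟨⟨Fin.init f.1.1, fun i => by simpa [Fin.init] using f.1.2 i.castSucc⟩,
    f.1.1 (Fin.last _), by simpa [Fin.init] using f.1.2 (Fin.last n), f.2⟩
  invFun f := ⟨⟨Fin.snoc f.1.1 f.2.1, fun i => by
    induction i using Fin.lastCases with
    | last => simpa using f.2.2.1
    | cast j =>
      rw [Fin.succ_castSucc, Fin.snoc_castSucc, Fin.snoc_castSucc]
      exact f.1.2 j⟩, by simpa using f.2.2.2⟩
  left_inv f := Subtype.ext (Subtype.ext (Fin.snoc_init_self f.1.1))
  right_inv f := Sigma.subtype_ext (Subtype.ext (by simp)) (by simp)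

theorem RelChain.card_fiber_one (a : α) (p : α → Prop) :
    Nat.card {f : RelChain r 1 // f.1 0 = a ∧ p (f.1 1)} = Nat.card {b // r a b ∧ p b} :=
  Nat.card_congr
    { toFun f := ⟨f.1.1 1, by obtain ⟨⟨g, hg⟩, rfl, -⟩ := f; exact hg 0, f.2.2⟩
      invFun b :=
        ⟨⟨![a, b.1], fun i => by simpa [Fin.fin_one_eq_zero i] using b.2.1⟩, rfl, b.2.2⟩
      left_inv f := Subtype.ext (Subtype.ext (funext fun i => by fin_cases i <;> simp [f.2.1]))
      right_inv b := rfl }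

variable [Finite α] [Fintype ι] [DecidableEq ι] (κ : α → ι) {L : Matrix ι ι ℕ}

theorem RelChain.card_last_fiber (hL : ∀ a Q, Nat.card {b // r a b ∧ κ b = Q} = L (κ a) Q)
    (n : ℕ) (Q : ι) :
    Nat.card {f : RelChain r n // κ (f.1 (Fin.last n)) = Q} =
      ∑ P, Nat.card {a // κ a = P} * (L ^ n) P Q := by
  induction n generalizing Q with
  | zero =>
    rw [Fintype.sum_eq_single Q fun P hP => by simp [hP], pow_zero,
      Matrix.one_apply_eq, mul_one]
    exact Nat.card_congr
      { toFun f := ⟨f.1.1 0, f.2⟩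
        invFun a := ⟨⟨fun _ => a.1, finZeroElim⟩, a.2⟩
        left_inv f := Subtype.ext <| Subtype.ext <|
          funext fun i => congrArg f.1.1 (Fin.fin_one_eq_zero i).symm
        right_inv a := rfl }
  | succ n ih =>
    calc Nat.card {f : RelChain r (n + 1) // κ (f.1 (Fin.last _)) = Q}
        = Nat.card (Σ f : RelChain r n, {b // r (f.1 (Fin.last n)) b ∧ κ b = Q}) :=
          Nat.card_congr (RelChain.snocEquiv n fun b => κ b = Q)
      _ = ∑ R, Nat.card {f : RelChain r n // κ (f.1 (Fin.last n)) = R} * L R Q :=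
          Nat.card_sigma_eq_sum_card_fiber_mul _ _ _ fun f => hL _ Q
      _ = ∑ P, Nat.card {a // κ a = P} * (L ^ (n + 1)) P Q := by
          simp only [ih, pow_succ, Matrix.mul_apply, Finset.sum_mul, Finset.mul_sum, mul_assoc]
          exact Finset.sum_comm

theorem RelChain.card (hL : ∀ a Q, Nat.card {b // r a b ∧ κ b = Q} = L (κ a) Q) (n : ℕ) :
    Nat.card (RelChain r n) = ∑ P, Nat.card {a // κ a = P} * ∑ Q, (L ^ n) P Q := by
  rw [← Nat.card_congr (Equiv.sigmaFiberEquiv fun f : RelChain r n => κ (f.1 (Fin.last n))),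
    Nat.card_sigma]
  simp only [RelChain.card_last_fiber κ hL, Finset.mul_sum]
  exact Finset.sum_comm

end RelChain

section Coloring

variable {V β : Type*} {G : SimpleGraph V}

abbrev ProperColoring (G : SimpleGraph V) (β : Type*) : Type _ :=
  {c : V → β // ∀ u v, G.Adj u v → c u ≠ c v}

def kernelPartition (c : ProperColoring G β) : IndepPartition G :=
  ⟨Setoid.ker c.1, fun u v huv hadj => c.2 u v hadj huv⟩

theorem kernelPartition_eq_iff {c : ProperColoring G β} {P : IndepPartition G} :
    kernelPartition c = P ↔ Setoid.ker c.1 = P.1 :=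
  Subtype.ext_iff

theorem proper_of_ker_eq {c : V → β} {P : IndepPartition G} (h : Setoid.ker c = P.1) :
    ∀ u v, G.Adj u v → c u ≠ c v :=
  fun u v hadj huv => P.2 u v (h ▸ Setoid.ker_def.2 huv) hadj

def ProperColoring.permEquiv (σ : Equiv.Perm β) :
    ProperColoring G β ≃ ProperColoring G β where
  toFun c := ⟨σ ∘ c.1, fun u v h => σ.injective.ne (c.2 u v h)⟩
  invFun c := ⟨σ.symm ∘ c.1, fun u v h => σ.symm.injective.ne (c.2 u v h)⟩
  left_inv c := by ext; simp
  right_inv c := by ext; simp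

theorem kernelPartition_permEquiv (σ : Equiv.Perm β) (c : ProperColoring G β) :
    kernelPartition (ProperColoring.permEquiv σ c) = kernelPartition c :=
  Subtype.ext (Setoid.ker_comp_of_injective σ.injective c.1)

theorem card_pointwise_ne_of_ker_eq [Finite β] {c₁ c₂ : V → β}
    (h : Setoid.ker c₁ = Setoid.ker c₂) (Q : IndepPartition G) :
    Nat.card {d : ProperColoring G β // (∀ v, c₁ v ≠ d.1 v) ∧ kernelPartition d = Q} =
      Nat.card {d : ProperColoring G β //
        (∀ v, c₂ v ≠ d.1 v) ∧ kernelPartition d = Q} := by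
  obtain ⟨σ, rfl⟩ := exists_perm_comp_eq_of_ker_eq h
  refine Nat.card_congr (Equiv.subtypeEquiv (ProperColoring.permEquiv σ) fun d => ?_)
  simp only [kernelPartition_permEquiv]
  exact and_congr_left' (forall_congr' fun v => σ.injective.ne_iff.symm)

theorem boxProd_pathGraph_proper_iff {n : ℕ} (c : V × Fin (n + 1) → β) :
    (∀ a b, (G □ pathGraph (n + 1)).Adj a b → c a ≠ c b) ↔
      (∀ i, ∀ u v, G.Adj u v → c (u, i) ≠ c (v, i)) ∧
        ∀ i : Fin n, ∀ v, c (v, i.castSucc) ≠ c (v, i.succ) := by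
  refine ⟨fun h => ⟨fun i u v huv => h _ _ (boxProd_adj.2 (.inl ⟨huv, rfl⟩)),
    fun i v => h _ _ (boxProd_adj.2 (.inr ⟨pathGraph_adj.2 (.inl (by simp)), rfl⟩))⟩, ?_⟩
  rintro ⟨hlayer, hstep⟩ ⟨u, i⟩ ⟨v, j⟩ hadj
  rcases boxProd_adj.1 hadj with ⟨huv, rfl : i = j⟩ | ⟨hij, rfl : u = v⟩
  · exact hlayer i u v huv
  rcases pathGraph_adj.1 hij with hij | hij <;> dsimp only at hij
  · obtain ⟨l, rfl, rfl⟩ : ∃ l : Fin n, l.castSucc = i ∧ l.succ = j :=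
      ⟨⟨i, by omega⟩, rfl, Fin.ext (by simp; omega)⟩
    exact hstep l u
  · obtain ⟨l, rfl, rfl⟩ : ∃ l : Fin n, l.castSucc = j ∧ l.succ = i :=
      ⟨⟨j, by omega⟩, rfl, Fin.ext (by simp; omega)⟩
    exact (hstep l u).symm

def boxProdPathColoringEquiv (G : SimpleGraph V) (β : Type*) (n : ℕ) :
    {c : V × Fin (n + 1) → β // ∀ a b, (G □ pathGraph (n + 1)).Adj a b → c a ≠ c b} ≃
      RelChain (fun c d : ProperColoring G β => ∀ v, c.1 v ≠ d.1 v) n where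
  toFun c := ⟨fun i => ⟨fun v => c.1 (v, i), ((boxProd_pathGraph_proper_iff c.1).1 c.2).1 i⟩,
    ((boxProd_pathGraph_proper_iff c.1).1 c.2).2⟩
  invFun f := ⟨fun p => (f.1 p.2).1 p.1,
    (boxProd_pathGraph_proper_iff _).2 ⟨fun i => (f.1 i).2, f.2⟩⟩
  left_inv _ := rfl
  right_inv _ := rfl

theorem card_boxProd_pathGraph_two (c₀ : ProperColoring G β) (Q : IndepPartition G) :
    Nat.card {c : V × Fin 2 → β // (∀ a b, (G □ pathGraph 2).Adj a b → c a ≠ c b) ∧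
        (∀ v, c (v, 0) = c₀.1 v) ∧ Setoid.ker (fun v => c (v, 1)) = Q.1} =
      Nat.card {d : ProperColoring G β //
        (∀ v, c₀.1 v ≠ d.1 v) ∧ kernelPartition d = Q} := by
  rw [← RelChain.card_fiber_one (r := fun c d : ProperColoring G β => ∀ v, c.1 v ≠ d.1 v)]
  refine Nat.card_congr ((Equiv.subtypeSubtypeEquivSubtypeInter _ _).symm.trans
    (Equiv.subtypeEquiv (boxProdPathColoringEquiv G β 1) fun c => ?_))
  exact and_congr (by rw [Subtype.ext_iff, funext_iff]; rfl) (by rw [kernelPartition_eq_iff]; rfl)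

end Coloring

theorem chromatic_from_transfer_matrix_general {V : Type*} [Fintype V]
    (G : SimpleGraph V) (k : ℕ)
    (cP : IndepPartition G → V → Fin k)
    (hcPker : ∀ P : IndepPartition G, Setoid.ker (cP P) = P.1)
    (L : Matrix (IndepPartition G) (IndepPartition G) ℕ)
    (hL : ∀ P Q : IndepPartition G,
      L P Q = Nat.card {c : V × Fin 2 → Fin k //
        (∀ a b, (G.boxProd (pathGraph 2)).Adj a b → c a ≠ c b) ∧
        (∀ v, c (v, 0) = cP P v) ∧
        Setoid.ker (fun v => c (v, 1)) = Q.1}) :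
    ∀ n : ℕ, 1 ≤ n →
      Nat.card {c : V × Fin (n + 1) → Fin k //
          ∀ a b, (G.boxProd (pathGraph (n + 1))).Adj a b → c a ≠ c b} =
        ∑ P : IndepPartition G,
          (Nat.card {c : V → Fin k //
            (∀ u v, G.Adj u v → c u ≠ c v) ∧ Setoid.ker c = P.1}) *
          ∑ Q : IndepPartition G, (L ^ n) P Q := by
  intro n _
  have hstep (c : ProperColoring G (Fin k)) (Q : IndepPartition G) :
      Nat.card {d : ProperColoring G (Fin k) //
          (∀ v, c.1 v ≠ d.1 v) ∧ kernelPartition d = Q} =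
        L (kernelPartition c) Q := by
    let P := kernelPartition c
    rw [card_pointwise_ne_of_ker_eq (c₂ := cP P) (hcPker P).symm Q, hL,
      card_boxProd_pathGraph_two ⟨cP P, proper_of_ker_eq (hcPker P)⟩]
  rw [Nat.card_congr (boxProdPathColoringEquiv G (Fin k) n), RelChain.card kernelPartition hstep]
  refine Finset.sum_congr rfl fun P _ => congrArg (· * _) (Nat.card_congr ?_)
  exact (Equiv.subtypeEquivRight fun _ => kernelPartition_eq_iff).trans
    (Equiv.subtypeSubtypeEquivSubtypeInter _ fun c => Setoid.ker c = P.1)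

/-- The total number of proper `k`-colorings of `G □ P_{n+1}` is the
weighted sum `Σ_P w_P Σ_Q (Lⁿ)(P,Q)`, where `w_P` is the number of proper
`k`-colorings of `G` with kernel partition `P`. -/
theorem chromatic_from_transfer_matrix {V : Type*} [Fintype V] [DecidableEq V]
    (G : SimpleGraph V) (k : ℕ) (hk : Fintype.card V ≤ k)
    (cP : IndepPartition G → V → Fin k)
    (hcPproper : ∀ P : IndepPartition G, ∀ u v, G.Adj u v → cP P u ≠ cP P v)
    (hcPker : ∀ P : IndepPartition G, Setoid.ker (cP P) = P.1)
    (L : Matrix (IndepPartition G) (IndepPartition G) ℕ)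
    (hL : ∀ P Q : IndepPartition G,
      L P Q = Nat.card {c : V × Fin 2 → Fin k //
        (∀ a b, (G.boxProd (pathGraph 2)).Adj a b → c a ≠ c b) ∧
        (∀ v, c (v, 0) = cP P v) ∧
        Setoid.ker (fun v => c (v, 1)) = Q.1}) :
    ∀ n : ℕ, 1 ≤ n →
      Nat.card {c : V × Fin (n + 1) → Fin k //
          ∀ a b, (G.boxProd (pathGraph (n + 1))).Adj a b → c a ≠ c b} =
        ∑ P : IndepPartition G,
          (Nat.card {c : V → Fin k //
            (∀ u v, G.Adj u v → c u ≠ c v) ∧ Setoid.ker c = P.1}) *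
          ∑ Q : IndepPartition G, (L ^ n) P Q :=
  chromatic_from_transfer_matrix_general G k cP hcPker L hL
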